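/- In the two-road stochastic network N₁ (roads with expected costs under belief μ ∈ [0,1]: road 1 cost x/2 + 3/2, road 2 cost (1−μ)(x/5 + 8/5) + 2μ where x is the flow on the respective road and total demand is 1), for every ε ∈ [0, 1/10] and every μ ∈ [0,1], the worst-case social cost over ε-BRUE flows equals Ψ^μ_ε = min(2, (12 + ε + 10ε² − 2μ + 4εμ)/(7 − 2μ)). -/

import Mathlib

/-- Road 1 latency in network N₁. -/
noncomputable def n1c1 (x : ℝ) : ℝ := x/2 + 3/2

/-- Expected road 2 latency in network N₁ under belief `μ = P(ω = 1)`. -/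
noncomputable def n1c2 (μ x : ℝ) : ℝ := (1 - μ) * (x/5 + 8/5) + 2*μ

/-- `(1 - y, y)` (with `y` the flow on road 2) is an `ε`-BRUE under belief `μ`. -/
def n1BRUE (μ ε y : ℝ) : Prop :=
  0 ≤ y ∧ y ≤ 1 ∧ (y < 1 → n1c1 (1 - y) ≤ n1c2 μ y + ε) ∧
    (0 < y → n1c2 μ y ≤ n1c1 (1 - y) + ε)

/-- Expected social cost of the flow `(1 - y, y)` under belief `μ`. -/
noncomputable def n1SC (μ y : ℝ) : ℝ := (1 - y) * n1c1 (1 - y) + y * n1c2 μ y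

theorem stmt14 (ε μ : ℝ) (hε : ε ∈ Set.Icc (0:ℝ) (1/10))
    (hμ : μ ∈ Set.Icc (0:ℝ) 1) :
    sSup {z | ∃ y, n1BRUE μ ε y ∧ z = n1SC μ y} =
      min 2 ((12 + ε + 10*ε^2 - 2*μ + 4*ε*μ) / (7 - 2*μ)) := by
  obtain ⟨hε0, hε1⟩ := hε
  obtain ⟨hμ0, hμ1⟩ := hμ
  have hD : (0:ℝ) < 7 - 2*μ := by linarith
  set F : ℝ := (12 + ε + 10*ε^2 - 2*μ + 4*ε*μ) / (7 - 2*μ) with hF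
  -- Upper bound
  have hub : ∀ z ∈ {z | ∃ y, n1BRUE μ ε y ∧ z = n1SC μ y}, z ≤ min 2 F := by
    rintro z ⟨y, ⟨hy0, hy1, h3, h4⟩, rfl⟩
    have hylt : y < 1 := by
      rcases lt_or_eq_of_le hy1 with h | h
      · exact h
      · exfalso
        have h' := h4 (by linarith)
        simp only [n1c1, n1c2] at h'
        nlinarith
    have ht1 : 4 - 4*μ - 10*ε ≤ y*(7-2*μ) := by
      have h' := h3 hylt
      simp only [n1c1, n1c2] at h'
      nlinarith
    have ht2 : y*(7-2*μ) ≤ 4 - 4*μ + 10*ε := by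
      rcases eq_or_lt_of_le hy0 with h | h
      · nlinarith
      · have h' := h4 h
        simp only [n1c1, n1c2] at h'
        nlinarith
    refine le_min ?_ ?_
    · simp only [n1SC, n1c1, n1c2]
      nlinarith
    · rw [hF, le_div_iff₀ hD]
      simp only [n1SC, n1c1, n1c2]
      nlinarith [mul_nonneg (sub_nonneg.2 ht1) (sub_nonneg.2 (show y*(7-2*μ) + (4-4*μ-10*ε) ≤ 9 - 4*μ by nlinarith))]
  have hmem : min 2 F ∈ {z | ∃ y, n1BRUE μ ε y ∧ z = n1SC μ y} := by
    rcases le_or_gt (4 - 4*μ - 10*ε) 0 with hb | hb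
    · have hF2 : 2 ≤ F := by rw [hF, le_div_iff₀ hD]; nlinarith
      rw [min_eq_left hF2]
      refine ⟨0, ⟨le_refl 0, by norm_num, ?_, ?_⟩, ?_⟩
      · intro _
        simp only [n1c1, n1c2]
        nlinarith
      · intro h; exact absurd h (lt_irrefl 0)
      · simp only [n1SC, n1c1, n1c2]; ring
    · have hF2 : F ≤ 2 := by rw [hF, div_le_iff₀ hD]; nlinarith
      rw [min_eq_right hF2]
      have hyD : (4-4*μ-10*ε)/(7-2*μ) * (7-2*μ) = 4-4*μ-10*ε := by
        exact div_mul_cancel₀ _ hD.ne'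
      refine ⟨(4-4*μ-10*ε)/(7-2*μ), ⟨?_, ?_, ?_, ?_⟩, ?_⟩
      · positivity
      · rw [div_le_one hD]; linarith
      · intro _
        simp only [n1c1, n1c2]
        nlinarith [hyD]
      · intro _
        simp only [n1c1, n1c2]
        nlinarith [hyD]
      · simp only [n1SC, n1c1, n1c2, hF]
        field_simp
        ring
  have hne : {z | ∃ y, n1BRUE μ ε y ∧ z = n1SC μ y}.Nonempty := ⟨_, hmem⟩
  exact le_antisymm (csSup_le hne hub) (le_csSup ⟨min 2 F, hub⟩ hmem)
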